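/- Let ℓ be an odd prime, ζ a primitive ℓ-th root of unity, σ ∈ Gal(ℚ(ζ)/ℚ), and χ the cyclotomic character with ζ^σ = ζ^{χ(σ)}. Then for 1 ≤ r ≤ ℓ − 2 and α ≡ 1 mod (1−ζ): ℒ^r(α^σ) ≡ χ(σ)^r · ℒ^r(α) (mod ℓ). -/

import Mathlib

open PowerSeries

/-- Kummer's differential logarithm: for a polynomial `f ∈ ℤ[X]` (representing
`α = f(ζ)`), `kummerL f r` is the `r`-th derivative of `log f(e^v)` at `v = 0`, computed
formally as `(r−1)! · coeff_{r−1} (g'/g)` where `g = f(e^v) ∈ ℚ⟦v⟧`. -/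
noncomputable def kummerL (f : Polynomial ℤ) (r : ℕ) : ℚ :=
  ((r - 1).factorial : ℚ) *
    PowerSeries.coeff (r - 1)
      (PowerSeries.derivative ℚ (Polynomial.eval₂ (Int.castRingHom (PowerSeries ℚ))
          (PowerSeries.exp ℚ) f) *
        (Polynomial.eval₂ (Int.castRingHom (PowerSeries ℚ)) (PowerSeries.exp ℚ) f)⁻¹)

/-- `x ≡ 0 (mod ℓ)` for a rational number `x`, in the `ℓ`-adic sense. -/
def RatModCong (ℓ : ℕ) (x : ℚ) : Prop :=
  ∃ a b : ℤ, ¬ (ℓ : ℤ) ∣ b ∧ (b : ℚ) * x = (ℓ : ℚ) * a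

/-!
Put `F = f(e^X) ∈ ℚ⟦X⟧`; then `kummerL f r` is the Hurwitz coefficient `(r-1)! [X^(r-1)]` of
`F'/F`. Since `f'(ζ) = f(ζ^c)`, the polynomial `f'` agrees with `g = f(X^c)` modulo the cyclotomic
polynomial `Φ_ℓ`, and `g(e^X) = F(cX)` gives `ℒ^r(g) = c^r ℒ^r(f)` exactly. So it suffices that
replacing `g` by `g + Φ_ℓ h` changes `ℒ^r` by a multiple of `ℓ`.

Series whose Hurwitz coefficients of index `≤ N` are `ℓ`-integral form a subring, which is closed
under inverting series with unit constant term, and the derivative maps level `N + 1` to level `N`.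
The Hurwitz coefficients of `Φ_ℓ(e^X) = ∑_{j<ℓ} e^(jX)` are the power sums `∑_{j<ℓ} j^k`, divisible
by `ℓ` for `k < ℓ - 1`; hence `F'/F - G'/G = (Φ' H G + Φ (H' G - H G')) / (F G)` is `ℓ` times a
series that is `ℓ`-integral up to index `ℓ - 3`. The constant terms `f(1)`, `f'(1)` are `ℓ`-adic
units because `α ≡ 1 mod (1 - ζ)` forces `f(1) ≡ 1 (mod ℓ)`.
-/

open Polynomial Finset
open scoped Nat

namespace PowerSeries

variable {R : Type*} [CommRing R]

noncomputable def hurwitzCoeff (k : ℕ) : R⟦X⟧ →ₗ[R] R := (k ! : R) • coeff k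

lemma hurwitzCoeff_apply (k : ℕ) (A : R⟦X⟧) : hurwitzCoeff k A = k ! * coeff k A := rfl

lemma hurwitzCoeff_zero (A : R⟦X⟧) : hurwitzCoeff 0 A = constantCoeff A := by
  simp [hurwitzCoeff_apply]

lemma hurwitzCoeff_one (k : ℕ) : hurwitzCoeff k (1 : R⟦X⟧) = if k = 0 then 1 else 0 := by
  split_ifs with hk <;> simp [hurwitzCoeff_apply, coeff_one, hk]

lemma hurwitzCoeff_mul (k : ℕ) (A B : R⟦X⟧) :
    hurwitzCoeff k (A * B) =
      ∑ i ∈ range (k + 1), k.choose i * hurwitzCoeff i A * hurwitzCoeff (k - i) B := by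
  rw [hurwitzCoeff_apply, coeff_mul, Nat.sum_antidiagonal_eq_sum_range_succ_mk, mul_sum]
  refine sum_congr rfl fun i hi => ?_
  rw [← Nat.choose_mul_factorial_mul_factorial (Nat.lt_succ_iff.mp (mem_range.mp hi))]
  simp only [hurwitzCoeff_apply]
  push_cast
  ring

lemma hurwitzCoeff_derivative (k : ℕ) (A : R⟦X⟧) :
    hurwitzCoeff k (d⁄dX R A) = hurwitzCoeff (k + 1) A := by
  rw [hurwitzCoeff_apply, hurwitzCoeff_apply, coeff_derivative, Nat.factorial_succ]
  push_cast
  ring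

lemma hurwitzCoeff_rescale (k : ℕ) (a : R) (A : R⟦X⟧) :
    hurwitzCoeff k (rescale a A) = a ^ k * hurwitzCoeff k A := by
  rw [hurwitzCoeff_apply, hurwitzCoeff_apply, coeff_rescale]
  ring

lemma hurwitzCoeff_exp_pow [Algebra ℚ R] (k n : ℕ) : hurwitzCoeff k (exp R ^ n) = (n : R) ^ k := by
  have h : (k ! : R) * algebraMap ℚ R (1 / k !) = 1 := by
    rw [← map_natCast (algebraMap ℚ R), ← map_mul, mul_one_div_cancel (by positivity), map_one]
  rw [exp_pow_eq_rescale_exp, hurwitzCoeff_rescale, hurwitzCoeff_apply, coeff_exp, h, mul_one]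

lemma derivative_rescale (a : R) (A : R⟦X⟧) :
    d⁄dX R (rescale a A) = a • rescale a (d⁄dX R A) := by
  ext k
  simp only [coeff_derivative, coeff_rescale, coeff_smul, smul_eq_mul, pow_succ]
  ring

def hurwitzSubring (S : Subring R) (N : ℕ) : Subring R⟦X⟧ where
  carrier := {A | ∀ k ≤ N, hurwitzCoeff k A ∈ S}
  mul_mem' {A B} hA hB k hk := by
    rw [hurwitzCoeff_mul]
    exact S.sum_mem fun i hi => S.mul_mem (S.mul_mem (natCast_mem S _)
      (hA i (by have := mem_range.mp hi; omega))) (hB (k - i) (by omega))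
  one_mem' k _ := by
    rw [hurwitzCoeff_one]
    split_ifs
    exacts [S.one_mem, S.zero_mem]
  add_mem' hA hB k hk := by
    rw [map_add]
    exact S.add_mem (hA k hk) (hB k hk)
  zero_mem' k _ := by simp
  neg_mem' hA k hk := by
    rw [map_neg]
    exact S.neg_mem (hA k hk)

section HurwitzSubring

variable {S : Subring R} {N : ℕ} {A : R⟦X⟧}

lemma hurwitzSubring_mono {M : ℕ} (h : M ≤ N) : hurwitzSubring S N ≤ hurwitzSubring S M :=
  fun _ hA k hk => hA k (hk.trans h)

lemma derivative_mem_hurwitzSubring (hA : A ∈ hurwitzSubring S (N + 1)) :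
    d⁄dX R A ∈ hurwitzSubring S N := fun k hk => by
  rw [hurwitzCoeff_derivative]
  exact hA (k + 1) (by omega)

lemma exp_pow_mem_hurwitzSubring [Algebra ℚ R] (n : ℕ) : exp R ^ n ∈ hurwitzSubring S N :=
  fun k _ => by
    rw [hurwitzCoeff_exp_pow]
    exact S.pow_mem (natCast_mem S n) k

end HurwitzSubring

section Field

variable {K : Type*} [Field K]

lemma hurwitzCoeff_inv (k : ℕ) {A : K⟦X⟧} (hA : constantCoeff A ≠ 0) :
    hurwitzCoeff k A⁻¹ = (constantCoeff A)⁻¹ * (hurwitzCoeff k 1 - ∑ i ∈ range k,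
      k.choose (i + 1) * hurwitzCoeff (i + 1) A * hurwitzCoeff (k - (i + 1)) A⁻¹) := by
  rw [← PowerSeries.mul_inv_cancel A hA, hurwitzCoeff_mul, sum_range_succ', Nat.choose_zero_right,
    Nat.cast_one, one_mul, Nat.sub_zero, hurwitzCoeff_zero, add_sub_cancel_left,
    inv_mul_cancel_left₀ hA]

lemma inv_mem_hurwitzSubring {S : Subring K} {N : ℕ} {A : K⟦X⟧} (hA : A ∈ hurwitzSubring S N)
    (h0 : (constantCoeff A)⁻¹ ∈ S) : A⁻¹ ∈ hurwitzSubring S N := by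
  by_cases hc : constantCoeff A = 0
  · rw [inv_eq_zero.mpr hc]
    exact zero_mem _
  intro k hk
  induction k using Nat.strong_induction_on with
  | _ k ih =>
    rw [hurwitzCoeff_inv k hc]
    refine S.mul_mem h0 (S.sub_mem (one_mem (hurwitzSubring S N) k hk) (S.sum_mem fun i hi => ?_))
    have hi : i < k := mem_range.mp hi
    exact S.mul_mem (S.mul_mem (natCast_mem S _) (hA _ (by omega))) (ih _ (by omega) (by omega))

lemma rescale_inv (a : K) (A : K⟦X⟧) : (rescale a A)⁻¹ = rescale a A⁻¹ := by
  have hc : constantCoeff (rescale a A) = constantCoeff A := by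
    rw [← coeff_zero_eq_constantCoeff_apply, coeff_rescale, pow_zero, one_mul,
      coeff_zero_eq_constantCoeff_apply]
  by_cases hA : constantCoeff A = 0
  · rw [inv_eq_zero.mpr hA, inv_eq_zero.mpr (hc.trans hA), map_zero]
  rw [PowerSeries.inv_eq_iff_mul_eq_one (hc ▸ hA), ← map_mul, PowerSeries.inv_mul_cancel A hA,
    map_one]

lemma derivative_mul_inv_sub_derivative_mul_inv {F G P H : K⟦X⟧} (hF : constantCoeff F ≠ 0)
    (hG : constantCoeff G ≠ 0) (hFG : F = G + P * H) :
    d⁄dX K F * F⁻¹ - d⁄dX K G * G⁻¹ =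
      (d⁄dX K P * (H * G) + P * (d⁄dX K H * G - H * d⁄dX K G)) * (F⁻¹ * G⁻¹) := by
  have hdF : d⁄dX K F = d⁄dX K G + d⁄dX K P * H + P * d⁄dX K H := by
    rw [hFG, map_add, Derivation.leibniz, smul_eq_mul, smul_eq_mul]
    ring
  linear_combination G * F⁻¹ * G⁻¹ * hdF - d⁄dX K G * F⁻¹ * G⁻¹ * hFG
    - d⁄dX K F * F⁻¹ * PowerSeries.mul_inv_cancel G hG
    + d⁄dX K G * G⁻¹ * PowerSeries.mul_inv_cancel F hF

lemma derivative_rescale_mul_inv (a : K) (A : K⟦X⟧) :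
    d⁄dX K (rescale a A) * (rescale a A)⁻¹ = a • rescale a (d⁄dX K A * A⁻¹) := by
  rw [derivative_rescale, rescale_inv, smul_mul_assoc, map_mul]

end Field

end PowerSeries

section EvalExp

variable (R : Type*) [CommRing R] [Algebra ℚ R]

noncomputable def evalExp : ℤ[X] →+* R⟦X⟧ := eval₂RingHom (Int.castRingHom R⟦X⟧) (exp R)

variable {R}

lemma evalExp_apply (f : ℤ[X]) : evalExp R f = f.eval₂ (Int.castRingHom R⟦X⟧) (exp R) := rfl

lemma constantCoeff_evalExp (f : ℤ[X]) : constantCoeff (evalExp R f) = f.eval 1 := by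
  rw [evalExp_apply, hom_eval₂, constantCoeff_exp, eval₂_at_one]
  exact eq_intCast _ _

lemma evalExp_mem_hurwitzSubring (S : Subring R) (N : ℕ) (f : ℤ[X]) :
    evalExp R f ∈ hurwitzSubring S N := by
  rw [evalExp_apply, eval₂_eq_sum_range]
  exact sum_mem fun i _ => mul_mem (intCast_mem _ _) (exp_pow_mem_hurwitzSubring i)

lemma evalExp_comp_X_pow (f : ℤ[X]) (c : ℕ) :
    evalExp R (f.comp (Polynomial.X ^ c)) = rescale (c : R) (evalExp R f) := by
  rw [evalExp_apply, eval₂_comp, eval₂_X_pow, exp_pow_eq_rescale_exp, evalExp_apply, hom_eval₂]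
  congr 1
  exact Subsingleton.elim _ _

lemma hurwitzCoeff_evalExp_cyclotomic (p : ℕ) [Fact p.Prime] (k : ℕ) :
    hurwitzCoeff k (evalExp R (cyclotomic p ℤ)) = ((∑ j ∈ range p, j ^ k : ℕ) : R) := by
  rw [cyclotomic_prime, map_sum, map_sum]
  push_cast
  exact sum_congr rfl fun j _ => by
    rw [map_pow, evalExp_apply, Polynomial.eval₂_X, hurwitzCoeff_exp_pow]

end EvalExp

lemma kummerL_eq_hurwitzCoeff (f : ℤ[X]) (r : ℕ) :
    kummerL f r = hurwitzCoeff (r - 1) (d⁄dX ℚ (evalExp ℚ f) * (evalExp ℚ f)⁻¹) := rfl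

lemma kummerL_comp_X_pow (f : ℤ[X]) (c : ℕ) {r : ℕ} (hr : 1 ≤ r) :
    kummerL (f.comp (Polynomial.X ^ c)) r = (c : ℚ) ^ r * kummerL f r := by
  rw [kummerL_eq_hurwitzCoeff, kummerL_eq_hurwitzCoeff, evalExp_comp_X_pow,
    derivative_rescale_mul_inv, map_smul, hurwitzCoeff_rescale, smul_eq_mul, ← mul_assoc,
    ← pow_succ', Nat.sub_add_cancel hr]

lemma cyclotomic_dvd_sub_of_aeval_eq {K : Type*} [Field K] [CharZero K] {n : ℕ} (hn : 0 < n)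
    {ζ : K} (hζ : IsPrimitiveRoot ζ n) {f g : ℤ[X]} (h : aeval ζ f = aeval ζ g) :
    cyclotomic n ℤ ∣ f - g := by
  rw [cyclotomic_eq_minpoly hζ hn]
  exact minpoly.isIntegrallyClosed_dvd (hζ.isIntegral hn) (by rw [map_sub, h, sub_self])

lemma dvd_eval_one_sub_of_cyclotomic_dvd_sub (p : ℕ) [Fact p.Prime] {f g : ℤ[X]}
    (h : cyclotomic p ℤ ∣ f - g) : (p : ℤ) ∣ f.eval 1 - g.eval 1 := by
  simpa [eval_one_cyclotomic_prime] using eval_dvd (x := 1) h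

section pIntegral

variable (p : ℕ) [hp : Fact p.Prime]

lemma prime_dvd_sum_range_pow {k : ℕ} (hk : k < p - 1) : p ∣ ∑ j ∈ range p, j ^ k := by
  rw [← ZMod.natCast_eq_zero_iff, Nat.cast_sum]
  push_cast
  rw [← FiniteField.sum_pow_lt_card_sub_one (ZMod p) k (by rwa [ZMod.card])]
  exact sum_nbij' Nat.cast ZMod.val (fun _ _ => mem_univ _) (fun x _ => mem_range.mpr x.val_lt)
    (fun j hj => ZMod.val_cast_of_lt (mem_range.mp hj)) (fun x _ => ZMod.natCast_zmod_val x)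
    (fun _ _ => rfl)

lemma inv_intCast_mem_integer {m : ℤ} (hm : ¬ (p : ℤ) ∣ m) :
    (m : ℚ)⁻¹ ∈ (Rat.padicValuation p).integer := by
  rw [Valuation.mem_integer_iff, map_inv₀, Rat.padicValuation_cast,
    Int.padicValuation_eq_one_iff.mpr hm, inv_one]

lemma ratModCong_of_inv_mul_mem_integer {x : ℚ}
    (hx : (p : ℚ)⁻¹ * x ∈ (Rat.padicValuation p).integer) : RatModCong p x := by
  set y := (p : ℚ)⁻¹ * x
  have hden : ¬ p ∣ y.den := Rat.padicValuation_le_one_iff.mp hx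
  refine ⟨y.num, y.den, Int.natCast_dvd_natCast.not.mpr hden, ?_⟩
  have hp0 : (p : ℚ) ≠ 0 := Nat.cast_ne_zero.mpr hp.out.ne_zero
  calc ((y.den : ℤ) : ℚ) * x = p * (y * y.den) := by simp only [y]; field_simp; push_cast; ring
    _ = p * y.num := by rw [Rat.mul_den_eq_num]

lemma inv_smul_evalExp_cyclotomic_mem :
    (p : ℚ)⁻¹ • evalExp ℚ (cyclotomic p ℤ) ∈
      hurwitzSubring (Rat.padicValuation p).integer (p - 2) := by
  intro k hk
  obtain ⟨m, hm⟩ := prime_dvd_sum_range_pow p (show k < p - 1 by have := hp.out.two_le; omega)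
  have hp0 : (p : ℚ) ≠ 0 := Nat.cast_ne_zero.mpr hp.out.ne_zero
  rw [map_smul, hurwitzCoeff_evalExp_cyclotomic, hm, smul_eq_mul, Nat.cast_mul,
    inv_mul_cancel_left₀ hp0]
  exact natCast_mem _ m

lemma inv_mul_kummerL_sub_mem_integer {f g : ℤ[X]} (hfg : cyclotomic p ℤ ∣ f - g)
    (hf : ¬ (p : ℤ) ∣ f.eval 1) (hg : ¬ (p : ℤ) ∣ g.eval 1) {r : ℕ} (hr : 1 ≤ r) (hrp : r + 2 ≤ p) :
    (p : ℚ)⁻¹ * (kummerL f r - kummerL g r) ∈ (Rat.padicValuation p).integer := by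
  obtain ⟨h, hfgh⟩ := hfg
  set F := evalExp ℚ f
  set G := evalExp ℚ g
  set H := evalExp ℚ h
  set Φ := evalExp ℚ (cyclotomic p ℤ)
  set T := hurwitzSubring (Rat.padicValuation p).integer (r - 1)
  have hFG : F = G + Φ * H := by rw [← map_mul, ← map_add, ← hfgh, add_sub_cancel]
  have hF0 : constantCoeff F ≠ 0 := by
    rw [constantCoeff_evalExp]
    exact Int.cast_ne_zero.mpr fun h0 => hf (h0 ▸ dvd_zero _)
  have hG0 : constantCoeff G ≠ 0 := by
    rw [constantCoeff_evalExp]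
    exact Int.cast_ne_zero.mpr fun h0 => hg (h0 ▸ dvd_zero _)
  have hΦ : (p : ℚ)⁻¹ • Φ ∈ hurwitzSubring (Rat.padicValuation p).integer (r - 1 + 1) :=
    hurwitzSubring_mono (by omega) (inv_smul_evalExp_cyclotomic_mem p)
  have hmem : ∀ q : ℤ[X], evalExp ℚ q ∈ T ∧ d⁄dX ℚ (evalExp ℚ q) ∈ T := fun q =>
    ⟨evalExp_mem_hurwitzSubring _ _ q,
      derivative_mem_hurwitzSubring (evalExp_mem_hurwitzSubring _ _ q)⟩
  have hinv : ∀ q : ℤ[X], ¬ (p : ℤ) ∣ q.eval 1 → (evalExp ℚ q)⁻¹ ∈ T := fun q hq =>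
    inv_mem_hurwitzSubring (evalExp_mem_hurwitzSubring _ _ q)
      (by rw [constantCoeff_evalExp]; exact inv_intCast_mem_integer p hq)
  have hT : (d⁄dX ℚ ((p : ℚ)⁻¹ • Φ) * (H * G) + (p : ℚ)⁻¹ • Φ * (d⁄dX ℚ H * G - H * d⁄dX ℚ G)) *
      (F⁻¹ * G⁻¹) ∈ T :=
    T.mul_mem (T.add_mem (T.mul_mem (derivative_mem_hurwitzSubring hΦ)
      (T.mul_mem (hmem h).1 (hmem g).1)) (T.mul_mem (hurwitzSubring_mono (by omega) hΦ)
      (T.sub_mem (T.mul_mem (hmem h).2 (hmem g).1) (T.mul_mem (hmem h).1 (hmem g).2))))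
      (T.mul_mem (hinv f hf) (hinv g hg))
  rw [kummerL_eq_hurwitzCoeff, kummerL_eq_hurwitzCoeff, ← map_sub, ← smul_eq_mul, ← map_smul,
    derivative_mul_inv_sub_derivative_mul_inv hF0 hG0 hFG]
  rw [Derivation.map_smul, smul_mul_assoc, smul_mul_assoc, ← smul_add, smul_mul_assoc] at hT
  exact hT (r - 1) le_rfl

end pIntegral

theorem kummerL_galois_equivariant_general (ℓ : ℕ) (hℓ : ℓ.Prime)
    (ζ : ℂ) (hζ : IsPrimitiveRoot ζ ℓ)
    (c : ℕ)
    (f f' : Polynomial ℤ)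
    (hfcong : ∃ u : Polynomial ℤ,
      Polynomial.aeval ζ f - 1 = (1 - ζ) * Polynomial.aeval ζ u)
    (hconj : Polynomial.aeval ζ f' = Polynomial.aeval (ζ ^ c) f)
    (r : ℕ) (hr1 : 1 ≤ r) (hr2 : r ≤ ℓ - 2) :
    RatModCong ℓ (kummerL f' r - (c : ℚ) ^ r * kummerL f r) := by
  have := Fact.mk hℓ
  obtain ⟨u, hu⟩ := hfcong
  set g := f.comp (Polynomial.X ^ c)
  have hf'g : cyclotomic ℓ ℤ ∣ f' - g := cyclotomic_dvd_sub_of_aeval_eq hℓ.pos hζ (by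
    rw [hconj, aeval_comp, map_pow, aeval_X])
  have hf : cyclotomic ℓ ℤ ∣ f - (1 + (1 - Polynomial.X) * u) :=
    cyclotomic_dvd_sub_of_aeval_eq hℓ.pos hζ (by simp [← hu])
  have hg1 : (ℓ : ℤ) ∣ g.eval 1 - 1 := by
    simpa [g, eval_comp] using dvd_eval_one_sub_of_cyclotomic_dvd_sub ℓ hf
  have hf'1 : (ℓ : ℤ) ∣ f'.eval 1 - 1 := by
    simpa using (dvd_eval_one_sub_of_cyclotomic_dvd_sub ℓ hf'g).add hg1
  have hunit : ∀ x : ℤ, (ℓ : ℤ) ∣ x - 1 → ¬ (ℓ : ℤ) ∣ x := fun x h hx =>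
    (Nat.prime_iff_prime_int.mp hℓ).not_dvd_one (by simpa using dvd_sub hx h)
  rw [← kummerL_comp_X_pow f c hr1]
  exact ratModCong_of_inv_mul_mem_integer ℓ (inv_mul_kummerL_sub_mem_integer ℓ hf'g
    (hunit _ hf'1) (hunit _ hg1) hr1 (by omega))

/-- Galois equivariance of Kummer's differential logarithms:
`ℒ^r(α^σ) ≡ χ(σ)^r · ℒ^r(α) (mod ℓ)` for `1 ≤ r ≤ ℓ − 2`, where `σ ∈ Gal(ℚ(ζ)/ℚ)` sends
`ζ` to `ζ^c` (`c = χ(σ)` the cyclotomic character), `α = f(ζ) ≡ 1 mod (1 − ζ)`, and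
`α^σ = f(ζ^c) = f'(ζ)`. -/
theorem kummerL_galois_equivariant (ℓ : ℕ) (hℓ : ℓ.Prime) (hodd : ℓ ≠ 2)
    (ζ : ℂ) (hζ : IsPrimitiveRoot ζ ℓ)
    (c : ℕ) (hc : ¬ ℓ ∣ c)
    (f f' : Polynomial ℤ)
    (hf1 : Polynomial.eval 1 f ≠ 0) (hf'1 : Polynomial.eval 1 f' ≠ 0)
    (hfcong : ∃ u : Polynomial ℤ,
      Polynomial.aeval ζ f - 1 = (1 - ζ) * Polynomial.aeval ζ u)
    (hconj : Polynomial.aeval ζ f' = Polynomial.aeval (ζ ^ c) f)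
    (r : ℕ) (hr1 : 1 ≤ r) (hr2 : r ≤ ℓ - 2) :
    RatModCong ℓ (kummerL f' r - (c : ℚ) ^ r * kummerL f r) :=
  kummerL_galois_equivariant_general ℓ hℓ ζ hζ c f f' hfcong hconj r hr1 hr2
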